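/- arXiv:2202.07480 — 2 statements merged into one kernel-verified Lean document; each statement's English description precedes it below -/
import Mathlib

section
/- Let V be a finite set and let f, g : 2^V × 2^V → 2^V be monotone (with respect to inclusion) in both arguments. Define Z_a := νY_a. μX_a. νY_b. μX_b. ( f(X_a, Y_a) ∪ g(X_b, Y_b) ), Z_b := νY_a. μX_a. νY_b. μX_b. ( g(X_a, Y_a) ∪ f(X_b, Y_b) ), and Z_c := νY_c. μX_c. f(X_c, Y_c). Then Z_c ⊆ Z_a and Z_c ⊆ Z_b. -/
/-- Least fixed point of a set transformer (Knaster–Tarski form). -/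
def lfpSet {V : Type*} (f : Set V → Set V) : Set V := sInf {X | f X ⊆ X}

/-- Greatest fixed point of a set transformer (Knaster–Tarski form). -/
def gfpSet {V : Type*} (f : Set V → Set V) : Set V := sSup {X | X ⊆ f X}

lemma le_lfpSet {V : Type*} {f : Set V → Set V} {S : Set V}
    (h : ∀ X, f X ⊆ X → S ⊆ X) : S ⊆ lfpSet f := le_sInf h

lemma le_gfpSet {V : Type*} {f : Set V → Set V} {S : Set V}
    (h : S ⊆ f S) : S ⊆ gfpSet f := le_sSup h

lemma lfpSet_mono {V : Type*} {f g : Set V → Set V}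
    (h : ∀ X, f X ⊆ g X) : lfpSet f ⊆ lfpSet g :=
  sInf_le_sInf fun X hX => (h X).trans hX

lemma gfpSet_mono {V : Type*} {f g : Set V → Set V}
    (h : ∀ X, f X ⊆ g X) : gfpSet f ⊆ gfpSet g :=
  sSup_le_sSup fun X hX => hX.trans (h X)

/-- Z_c ⊆ Z_a and Z_c ⊆ Z_b for monotone f, g. -/
theorem nested_fixpoint_contained {V : Type*} [Fintype V]
    (f g : Set V → Set V → Set V)
    (hf : ∀ ⦃X₁ X₂ Y₁ Y₂ : Set V⦄, X₁ ⊆ X₂ → Y₁ ⊆ Y₂ → f X₁ Y₁ ⊆ f X₂ Y₂)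
    (hg : ∀ ⦃X₁ X₂ Y₁ Y₂ : Set V⦄, X₁ ⊆ X₂ → Y₁ ⊆ Y₂ → g X₁ Y₁ ⊆ g X₂ Y₂)
    (Za Zb Zc : Set V)
    (hZa : Za = gfpSet fun Ya => lfpSet fun Xa => gfpSet fun Yb => lfpSet fun Xb =>
      f Xa Ya ∪ g Xb Yb)
    (hZb : Zb = gfpSet fun Ya => lfpSet fun Xa => gfpSet fun Yb => lfpSet fun Xb =>
      g Xa Ya ∪ f Xb Yb)
    (hZc : Zc = gfpSet fun Yc => lfpSet fun Xc => f Xc Yc) :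
    Zc ⊆ Za ∧ Zc ⊆ Zb := by
  -- Zc is a post-fixed point of its own generating map.
  have hpost : Zc ⊆ lfpSet fun Xc => f Xc Zc := by
    rw [hZc]
    refine sSup_le fun Y hY => hY.trans (lfpSet_mono fun X => hf (subset_refl X) ?_)
    exact le_sSup hY
  constructor
  · rw [hZa]
    refine le_gfpSet (hpost.trans (lfpSet_mono fun X => ?_))
    -- f X Zc ⊆ gfp Yb. lfp Xb. (f X Zc ∪ g Xb Yb)
    refine le_gfpSet (le_lfpSet fun W hW => ?_)
    exact Set.subset_union_left.trans hW
  · rw [hZb]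
    refine le_gfpSet (le_lfpSet fun X hX => ?_)
    -- Zc ⊆ gfp Yb. lfp Xb. (g X Zc ∪ f Xb Yb)
    refine (?_ : Zc ⊆ _).trans hX
    rw [hZc]
    exact gfpSet_mono fun Y => lfpSet_mono fun W => Set.subset_union_right
end

section
/- Let ⟨G, Eℓ⟩ be a two-player game graph with live edges and let Q, G ⊆ V. Define Z* := νY. μX. ( Q ∩ [ (G ∩ Cpre(Y)) ∪ Apre(Y, X) ] ). Then Z* equals the winning region W of Player 0 in the fair adversarial game over ⟨G, Eℓ⟩ for the safe-Büchi winning condition ψ = □Q ∧ □◇G (i.e. the set of plays π with π(i) ∈ Q for all i and π(i) ∈ G for infinitely many i). Moreover, there exists a memoryless Player-0 strategy that wins the fair adversarial game for ψ from every vertex of Z*. -/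
/-- A two-player game graph with live edges: vertices are partitioned into
Player-0 vertices `V0` and Player-1 vertices `V1`, every vertex has a successor,
and live edges `El` are Player-1 edges. -/
structure LiveGameGraph (V : Type*) where
  V0 : Set V
  V1 : Set V
  E : V → V → Prop
  El : V → V → Prop
  cover : V0 ∪ V1 = Set.univ
  disj : V0 ∩ V1 = ∅
  succ_nonempty : ∀ v : V, ∃ w, E v w
  live_sub : ∀ v w, El v w → v ∈ V1 ∧ E v w

namespace LiveGameGraph

variable {V : Type*}

/-- Pre∃0(S) -/
def pre0 (Gm : LiveGameGraph V) (S : Set V) : Set V :=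
  {v | v ∈ Gm.V0 ∧ ∃ w, Gm.E v w ∧ w ∈ S}

/-- Pre∀1(S) -/
def pre1 (Gm : LiveGameGraph V) (S : Set V) : Set V :=
  {v | v ∈ Gm.V1 ∧ ∀ w, Gm.E v w → w ∈ S}

/-- Cpre(S) -/
def cpre (Gm : LiveGameGraph V) (S : Set V) : Set V := Gm.pre0 S ∪ Gm.pre1 S

/-- Lpre∃(T) -/
def lpre (Gm : LiveGameGraph V) (T : Set V) : Set V :=
  {v | ∃ w, Gm.El v w ∧ w ∈ T}

/-- Apre(S,T) -/
def apre (Gm : LiveGameGraph V) (S T : Set V) : Set V :=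
  Gm.cpre T ∪ (Gm.lpre T ∩ Gm.pre1 S)

end LiveGameGraph

namespace LiveGameGraph

variable {V : Type*}

/-- A play is strongly transition fair if every live edge whose source is visited
infinitely often is itself taken infinitely often. -/
def StronglyFair (Gm : LiveGameGraph V) (π : ℕ → V) : Prop :=
  ∀ v w, Gm.El v w → {i | π i = v}.Infinite → {i | π i = v ∧ π (i + 1) = w}.Infinite

/-- A Player-0 strategy: given the history (the prefix before the current vertex)
and the current vertex, it chooses an `E`-successor whenever the current vertex
belongs to Player 0. -/
def Strategy0 (Gm : LiveGameGraph V) (ρ : List V → V → V) : Prop :=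
  ∀ h v, v ∈ Gm.V0 → Gm.E v (ρ h v)

/-- A Player-1 strategy. -/
def Strategy1 (Gm : LiveGameGraph V) (ρ : List V → V → V) : Prop :=
  ∀ h v, v ∈ Gm.V1 → Gm.E v (ρ h v)

/-- The play compliant with the strategies `ρ0` and `ρ1` starting at `v0`. -/
def Compliant (Gm : LiveGameGraph V) (ρ0 ρ1 : List V → V → V) (v0 : V)
    (π : ℕ → V) : Prop :=
  π 0 = v0 ∧ ∀ i : ℕ,
    (π i ∈ Gm.V0 → π (i + 1) = ρ0 (List.ofFn fun j : Fin i => π j.1) (π i)) ∧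
    (π i ∈ Gm.V1 → π (i + 1) = ρ1 (List.ofFn fun j : Fin i => π j.1) (π i))

/-- Player 0 wins the fair adversarial game for the winning condition `φ`
from `v0` using the strategy `ρ0`. -/
def WinsFrom (Gm : LiveGameGraph V) (φ : (ℕ → V) → Prop)
    (ρ0 : List V → V → V) (v0 : V) : Prop :=
  Gm.Strategy0 ρ0 ∧ ∀ ρ1, Gm.Strategy1 ρ1 → ∀ π, Gm.Compliant ρ0 ρ1 v0 π →
    (Gm.StronglyFair π → φ π)

/-- The winning region of Player 0 in the fair adversarial game for `φ`. -/
def WinningRegion (Gm : LiveGameGraph V) (φ : (ℕ → V) → Prop) : Set V :=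
  {v0 | ∃ ρ0, Gm.WinsFrom φ ρ0 v0}

end LiveGameGraph

/-!
Write `F(Y, X) = Q ∩ ((G ∩ Cpre Y) ∪ Apre(Y, X))` and `Z = νY. μX. F(Y, X)`. Since
`Z = μX. F(Z, X)`, every `v ∈ Z` enters the Kleene approximation `∅ ⊆ X₁ ⊆ X₂ ⊆ …` of this least
fixpoint at some stage. Player 0 moves from `v ∈ Z` into `Z` if `v ∈ G` and one stage down
otherwise. Plays then stay in `Z ⊆ Q`; if they eventually avoided `G`, induction on `n` shows that
each `Xₙ` is eventually left for good: a vertex of `Xₙ₊₁ \ G` visited infinitely often is followed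
infinitely often by a vertex of `Xₙ`, either through `Cpre` or, by fairness, through its live edge
into `Xₙ`. This contradicts `Z = Xₘ`.

Conversely, approximate `Z` from above by `univ = Y₀ ⊇ Y₁ ⊇ …`; each `v ∉ Z` has a level `k` with
`v ∈ Yₖ \ Yₖ₊₁`, i.e. `v ∉ F(Yₖ, Yₖ₊₁)`. As long as the play stays in `Q`, Player 1 can keep the
level from rising, lowers it at `G`-vertices, and otherwise plays the live edges round robin. The
level stabilises, after which `G` is never visited and Player 1 only plays round robin, so the play
is fair and loses. A play that leaves `Q` is made fair by round robin too.
-/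


namespace OrderHom

variable {α : Type*} [CompleteLattice α] (f : α →o α)

theorem iterate_bot_le_lfp (n : ℕ) : f^[n] ⊥ ≤ f.lfp := by
  induction n with
  | zero => exact bot_le
  | succ n ih =>
    rw [Function.iterate_succ_apply']
    exact (f.mono ih).trans f.map_lfp.le

theorem gfp_le_iterate_top (n : ℕ) : f.gfp ≤ f^[n] ⊤ := by
  induction n with
  | zero => exact le_top
  | succ n ih =>
    rw [Function.iterate_succ_apply']
    exact f.map_gfp.ge.trans (f.mono ih)

theorem exists_iterate_bot_eq_lfp [WellFoundedGT α] : ∃ n, f^[n] ⊥ = f.lfp := by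
  obtain ⟨n, hn⟩ := WellFoundedGT.monotone_chain_condition
    ⟨fun n => f^[n] ⊥, Monotone.monotone_iterate_of_le_map f.mono bot_le⟩
  refine ⟨n, (f.iterate_bot_le_lfp n).antisymm (f.lfp_le ?_)⟩
  rw [← Function.iterate_succ_apply' f]
  exact (hn (n + 1) n.le_succ).ge

theorem exists_iterate_top_eq_gfp [WellFoundedLT α] : ∃ n, f^[n] ⊤ = f.gfp := by
  obtain ⟨n, hn⟩ := WellFoundedLT.antitone_chain_condition
    (Monotone.antitone_iterate_of_map_le f.mono (le_top : f ⊤ ≤ ⊤))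
  refine ⟨n, (f.le_gfp ?_).antisymm (f.gfp_le_iterate_top n)⟩
  rw [← Function.iterate_succ_apply' f]
  exact (hn (n + 1) n.le_succ).le

end OrderHom

section EntryStage

variable {V : Type*}

/-- For a chain `s` of sets with `s 0 = ∅`, the stage `n` at which `v` enters, i.e. `v ∈ s (n + 1)`
but `v ∉ s n`; it is `0` for a `v` that never enters. -/
noncomputable def entryStage (s : ℕ → Set V) (v : V) : ℕ := sInf {n | v ∈ s (n + 1)}

variable {s : ℕ → Set V} {v : V} {n : ℕ}

theorem entryStage_lt (h0 : s 0 = ∅) (hv : v ∈ s n) : entryStage s v < n := by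
  cases n with
  | zero => simp [h0] at hv
  | succ n => exact Nat.lt_succ_of_le (Nat.sInf_le hv)

theorem mem_entryStage_succ (h0 : s 0 = ∅) (hv : v ∈ s n) : v ∈ s (entryStage s v + 1) := by
  cases n with
  | zero => simp [h0] at hv
  | succ n => exact Nat.sInf_mem (s := {n | v ∈ s (n + 1)}) ⟨n, hv⟩

theorem notMem_entryStage (h0 : s 0 = ∅) : v ∉ s (entryStage s v) := by
  cases h : entryStage s v with
  | zero => simp [h0]
  | succ m =>
    unfold entryStage at h
    exact Nat.notMem_of_lt_sInf (s := {n | v ∈ s (n + 1)}) (by omega)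

end EntryStage

theorem Filter.Frequently.exists_frequently_eq {ι V : Type*} [Finite V] {l : Filter ι} {π : ι → V}
    {S : Set V} (h : ∃ᶠ i in l, π i ∈ S) : ∃ u ∈ S, ∃ᶠ i in l, π i = u := by
  have h' : ∃ᶠ i in l, ∃ u, u ∈ S ∧ π i = u := h.mono fun i hi => ⟨π i, hi, rfl⟩
  obtain ⟨u, hu⟩ := Filter.frequently_exists.1 h'
  obtain ⟨_, huS, -⟩ := hu.exists
  exact ⟨u, huS, hu.mono fun _ => And.right⟩

def safeBuchi {V : Type*} (Q G : Set V) (π : ℕ → V) : Prop :=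
  (∀ i, π i ∈ Q) ∧ ∀ N, ∃ i ≥ N, π i ∈ G

open Filter

namespace LiveGameGraph

section Basic

variable {V : Type*} (Gm : LiveGameGraph V) {S T S' T' : Set V} {v w : V}

theorem mem_V0_or_mem_V1 (v : V) : v ∈ Gm.V0 ∨ v ∈ Gm.V1 :=
  (Gm.cover.symm ▸ Set.mem_univ v : v ∈ Gm.V0 ∪ Gm.V1)

theorem notMem_V0_of_mem_V1 (h : v ∈ Gm.V1) : v ∉ Gm.V0 := fun h0 => by
  simpa [Gm.disj] using Set.mem_inter h0 h

theorem pre0_mono : Monotone Gm.pre0 := fun _ _ h _ ⟨h0, w, hE, hw⟩ => ⟨h0, w, hE, h hw⟩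

theorem pre1_mono : Monotone Gm.pre1 := fun _ _ h _ ⟨h1, hw⟩ => ⟨h1, fun w hE => h (hw w hE)⟩

theorem cpre_mono : Monotone Gm.cpre := fun _ _ h =>
  Set.union_subset_union (Gm.pre0_mono h) (Gm.pre1_mono h)

theorem lpre_mono : Monotone Gm.lpre := fun _ _ h _ ⟨w, hl, hw⟩ => ⟨w, hl, h hw⟩

theorem apre_mono (hS : S ⊆ S') (hT : T ⊆ T') : Gm.apre S T ⊆ Gm.apre S' T' :=
  Set.union_subset_union (Gm.cpre_mono hT)
    (Set.inter_subset_inter (Gm.lpre_mono hT) (Gm.pre1_mono hS))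

theorem apre_subset_cpre (hTS : T ⊆ S) : Gm.apre S T ⊆ Gm.cpre S :=
  Set.union_subset (Gm.cpre_mono hTS) (Set.inter_subset_right.trans Set.subset_union_right)

theorem exists_edge_mem_of_mem_cpre (h : v ∈ Gm.cpre S) (h0 : v ∈ Gm.V0) : ∃ w, Gm.E v w ∧ w ∈ S :=
  h.elim (·.2) fun h1 => absurd h0 (Gm.notMem_V0_of_mem_V1 h1.1)

theorem mem_of_mem_cpre (h : v ∈ Gm.cpre S) (h1 : v ∈ Gm.V1) (hE : Gm.E v w) : w ∈ S :=
  h.elim (fun h0 => absurd h0.1 (Gm.notMem_V0_of_mem_V1 h1)) (·.2 w hE)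

theorem mem_cpre_of_mem_apre (h : v ∈ Gm.apre S T) (h0 : v ∈ Gm.V0) : v ∈ Gm.cpre T :=
  h.resolve_right fun h' => Gm.notMem_V0_of_mem_V1 h'.2.1 h0

theorem notMem_of_notMem_cpre (h : v ∉ Gm.cpre S) (h0 : v ∈ Gm.V0) (hE : Gm.E v w) : w ∉ S :=
  fun hw => h (Or.inl ⟨h0, w, hE, hw⟩)

theorem exists_edge_notMem_of_notMem_cpre (h : v ∉ Gm.cpre S) (h1 : v ∈ Gm.V1) :
    ∃ w, Gm.E v w ∧ w ∉ S := by
  by_contra! hS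
  exact h (Or.inr ⟨h1, hS⟩)

open Classical in
noncomputable def succIn (S : Set V) (v : V) : V :=
  if h : ∃ w, Gm.E v w ∧ w ∈ S then h.choose else (Gm.succ_nonempty v).choose

theorem edge_succIn (S : Set V) (v : V) : Gm.E v (Gm.succIn S v) := by
  unfold succIn
  split_ifs with h
  exacts [h.choose_spec.1, (Gm.succ_nonempty v).choose_spec]

theorem succIn_mem (h : ∃ w, Gm.E v w ∧ w ∈ S) : Gm.succIn S v ∈ S := by
  rw [succIn, dif_pos h]
  exact h.choose_spec.2

def history (π : ℕ → V) (i : ℕ) : List V := List.ofFn fun j : Fin i => π j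

theorem mem_history {π : ℕ → V} {i : ℕ} : v ∈ history π i ↔ ∃ j < i, π j = v := by
  simp [history, List.mem_ofFn, Fin.exists_iff]

open Classical in
theorem count_history (π : ℕ → V) (v : V) (n : ℕ) :
    (history π n).count v = Nat.count (fun j => π j = v) n := by
  induction n with
  | zero => rfl
  | succ n ih =>
    rw [history, List.ofFn_succ_last, List.count_append, Nat.count_succ, ← ih]
    simp [history, List.count_singleton]

noncomputable def run (step : List V → V → V) (v0 : V) : ℕ → V
  | 0 => v0
  | n + 1 => step (List.ofFn fun j : Fin n => run step v0 j) (run step v0 n)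
decreasing_by all_goals omega

theorem exists_compliant (ρ0 ρ1 : List V → V → V) (v0 : V) : ∃ π, Gm.Compliant ρ0 ρ1 v0 π := by
  classical
  refine ⟨run (fun h v => if v ∈ Gm.V0 then ρ0 h v else ρ1 h v) v0, by rw [run], fun i => ?_⟩
  constructor <;> intro hi <;> rw [run]
  · rw [if_pos hi]
  · rw [if_neg (Gm.notMem_V0_of_mem_V1 hi)]

theorem Compliant.edge {Gm : LiveGameGraph V} {ρ0 ρ1 : List V → V → V} {v0 : V} {π : ℕ → V}
    (hρ0 : Gm.Strategy0 ρ0) (hρ1 : Gm.Strategy1 ρ1) (hπ : Gm.Compliant ρ0 ρ1 v0 π) (i : ℕ) :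
    Gm.E (π i) (π (i + 1)) := by
  rcases Gm.mem_V0_or_mem_V1 (π i) with h | h
  · rw [(hπ.2 i).1 h]; exact hρ0 _ _ h
  · rw [(hπ.2 i).2 h]; exact hρ1 _ _ h

end Basic

section RoundRobin

variable {V : Type*} [Fintype V] (Gm : LiveGameGraph V) {v w : V}

open Classical

noncomputable def liveSuccs (v : V) : List V := (Finset.univ.filter (Gm.El v)).toList

theorem mem_liveSuccs : w ∈ Gm.liveSuccs v ↔ Gm.El v w := by
  simp [liveSuccs]

/-- Without live successors the index is out of range and `getD` returns `d v`. -/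
noncomputable def roundRobin (d : V → V) (h : List V) (v : V) : V :=
  (Gm.liveSuccs v).getD (h.count v % (Gm.liveSuccs v).length) (d v)

theorem roundRobin_live (d : V → V) (h : List V) (hw : Gm.El v w) :
    Gm.El v (Gm.roundRobin d h v) := by
  have hpos : 0 < (Gm.liveSuccs v).length :=
    List.length_pos_of_mem (Gm.mem_liveSuccs.2 hw)
  rw [← Gm.mem_liveSuccs, roundRobin, List.getD_eq_getElem _ _ (Nat.mod_lt _ hpos)]
  exact List.getElem_mem _

theorem roundRobin_of_not_live (d : V → V) (h : List V) (hv : ∀ w, ¬Gm.El v w) :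
    Gm.roundRobin d h v = d v := by
  have : Gm.liveSuccs v = [] :=
    List.eq_nil_iff_forall_not_mem.2 fun w hw => hv w (Gm.mem_liveSuccs.1 hw)
  simp [roundRobin, this]

theorem edge_roundRobin {d : V → V} (hd : ∀ u, Gm.E u (d u)) (h : List V) (v : V) :
    Gm.E v (Gm.roundRobin d h v) := by
  by_cases hv : ∃ w, Gm.El v w
  · obtain ⟨w, hw⟩ := hv
    exact (Gm.live_sub _ _ (Gm.roundRobin_live d h hw)).2
  · push Not at hv
    rw [Gm.roundRobin_of_not_live d h hv]
    exact hd v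

/-- The `t`-th visit to `v` takes the live edge number `t mod (number of live edges)`. -/
theorem infinite_roundRobin_steps {π : ℕ → V} {d : V → V} {M : ℕ} (hw : Gm.El v w)
    (hv : {i | π i = v}.Infinite)
    (hπ : ∀ i ≥ M, π i = v → π (i + 1) = Gm.roundRobin d (history π i) v) :
    {i | π i = v ∧ π (i + 1) = w}.Infinite := by
  obtain ⟨k, hk, rfl⟩ := List.getElem_of_mem (Gm.mem_liveSuccs.2 hw)
  set L := Gm.liveSuccs v
  refine Set.infinite_of_forall_exists_gt fun a => ?_
  set t := k + L.length * (a + M + 1)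
  have ht : a + M < t := by
    have := Nat.le_mul_of_pos_left (a + M + 1) (k.zero_le.trans_lt hk)
    omega
  set i := Nat.nth (fun j => π j = v) t
  have hi : π i = v := Nat.nth_mem_of_infinite hv t
  have hti : t ≤ i := Nat.le_nth fun hf => absurd hf hv
  have hcount : (history π i).count v % L.length = k := by
    rw [count_history, Nat.count_nth_of_infinite hv, Nat.add_mul_mod_self_left, Nat.mod_eq_of_lt hk]
  refine ⟨i, ⟨hi, ?_⟩, by omega⟩
  rw [hπ i (by omega) hi, roundRobin, hcount, List.getD_eq_getElem]

theorem stronglyFair_of_roundRobin {π : ℕ → V} {d : V → V} {M : ℕ}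
    (hπ : ∀ i ≥ M, π i ∈ Gm.V1 → π (i + 1) = Gm.roundRobin d (history π i) (π i)) :
    Gm.StronglyFair π := fun v w hw hv =>
  Gm.infinite_roundRobin_steps hw hv fun i hi hiv =>
    hiv ▸ hπ i hi (hiv ▸ (Gm.live_sub v w hw).1)

end RoundRobin

section SafeBuchi

variable {V : Type*} (Gm : LiveGameGraph V) (Q G : Set V) {X Y : Set V} {v : V}

def buchiStep (Y : Set V) : Set V →o Set V where
  toFun X := Q ∩ ((G ∩ Gm.cpre Y) ∪ Gm.apre Y X)
  monotone' _ _ h :=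
    Set.inter_subset_inter_right _ (Set.union_subset_union_right _ (Gm.apre_mono subset_rfl h))

theorem buchiStep_mono : Monotone (Gm.buchiStep Q G) := fun _ _ h _ =>
  Set.inter_subset_inter_right _ (Set.union_subset_union
    (Set.inter_subset_inter_right _ (Gm.cpre_mono h)) (Gm.apre_mono h subset_rfl))

def buchiOuter : Set V →o Set V where
  toFun Y := (Gm.buchiStep Q G Y).lfp
  monotone' _ _ h := OrderHom.lfp.mono (Gm.buchiStep_mono Q G h)

variable {Q G}

theorem mem_cpre_of_mem_buchiStep (hXY : X ⊆ Y) (h : v ∈ Gm.buchiStep Q G Y X) : v ∈ Gm.cpre Y :=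
  h.2.elim (·.2) fun h' => Gm.apre_subset_cpre hXY h'

theorem mem_apre_of_mem_buchiStep (h : v ∈ Gm.buchiStep Q G Y X) (hG : v ∉ G) :
    v ∈ Gm.apre Y X :=
  h.2.resolve_left fun h' => hG h'.1

theorem notMem_cpre_of_notMem_buchiStep (hQ : v ∈ Q) (h : v ∉ Gm.buchiStep Q G Y X) :
    v ∉ Gm.cpre X :=
  fun hc => h ⟨hQ, Or.inr (Or.inl hc)⟩

theorem notMem_cpre_of_notMem_buchiStep_of_mem (hQ : v ∈ Q) (hG : v ∈ G)
    (h : v ∉ Gm.buchiStep Q G Y X) : v ∉ Gm.cpre Y :=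
  fun hc => h ⟨hQ, Or.inl ⟨hG, hc⟩⟩

theorem notMem_lpre_of_notMem_buchiStep (hQ : v ∈ Q) (h : v ∉ Gm.buchiStep Q G Y X)
    (hY : v ∈ Gm.pre1 Y) : v ∉ Gm.lpre X :=
  fun hl => h ⟨hQ, Or.inr (Or.inr ⟨hl, hY⟩)⟩

end SafeBuchi

section Soundness

variable {V : Type*} (Gm : LiveGameGraph V) (Q G : Set V) {v : V}

def innerStage (n : ℕ) : Set V := (Gm.buchiStep Q G (Gm.buchiOuter Q G).gfp)^[n] ∅

noncomputable def innerRank (v : V) : ℕ := entryStage (Gm.innerStage Q G) v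

open Classical in
noncomputable def buchiStrategy (v : V) : V :=
  Gm.succIn (if v ∈ G then (Gm.buchiOuter Q G).gfp else Gm.innerStage Q G (Gm.innerRank Q G v)) v

variable {Q G}

theorem lfp_buchiStep_gfp :
    (Gm.buchiStep Q G (Gm.buchiOuter Q G).gfp).lfp = (Gm.buchiOuter Q G).gfp :=
  (Gm.buchiOuter Q G).map_gfp

theorem innerStage_subset (n : ℕ) : Gm.innerStage Q G n ⊆ (Gm.buchiOuter Q G).gfp :=
  Gm.lfp_buchiStep_gfp ▸ OrderHom.iterate_bot_le_lfp _ n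

theorem innerStage_mono : Monotone (Gm.innerStage Q G) :=
  Monotone.monotone_iterate_of_le_map (OrderHom.mono _) bot_le

theorem exists_innerStage_eq [Finite V] :
    ∃ m, Gm.innerStage Q G m = (Gm.buchiOuter Q G).gfp := by
  obtain ⟨m, hm⟩ := OrderHom.exists_iterate_bot_eq_lfp (Gm.buchiStep Q G (Gm.buchiOuter Q G).gfp)
  exact ⟨m, by rw [innerStage, ← Set.bot_eq_empty, hm, Gm.lfp_buchiStep_gfp]⟩

theorem mem_buchiStep_innerRank [Finite V] (hv : v ∈ (Gm.buchiOuter Q G).gfp) :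
    v ∈ Gm.buchiStep Q G (Gm.buchiOuter Q G).gfp (Gm.innerStage Q G (Gm.innerRank Q G v)) := by
  obtain ⟨m, hm⟩ := Gm.exists_innerStage_eq (Q := Q) (G := G)
  have := mem_entryStage_succ rfl (hm ▸ hv)
  rwa [innerStage, Function.iterate_succ_apply'] at this

theorem buchiStrategy_mem [Finite V] (hv : v ∈ (Gm.buchiOuter Q G).gfp) (h0 : v ∈ Gm.V0) :
    Gm.buchiStrategy Q G v ∈ (Gm.buchiOuter Q G).gfp ∧
      (v ∉ G → Gm.buchiStrategy Q G v ∈ Gm.innerStage Q G (Gm.innerRank Q G v)) := by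
  have hstep := Gm.mem_buchiStep_innerRank hv
  by_cases hG : v ∈ G
  · refine ⟨?_, absurd hG⟩
    rw [buchiStrategy, if_pos hG]
    exact Gm.succIn_mem (Gm.exists_edge_mem_of_mem_cpre
      (Gm.mem_cpre_of_mem_buchiStep (Gm.innerStage_subset _) hstep) h0)
  · have hmem : Gm.buchiStrategy Q G v ∈ Gm.innerStage Q G (Gm.innerRank Q G v) := by
      rw [buchiStrategy, if_neg hG]
      exact Gm.succIn_mem (Gm.exists_edge_mem_of_mem_cpre
        (Gm.mem_cpre_of_mem_apre (Gm.mem_apre_of_mem_buchiStep hstep hG) h0) h0)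
    exact ⟨Gm.innerStage_subset _ hmem, fun _ => hmem⟩

theorem strategy0_buchiStrategy : Gm.Strategy0 fun _ v => Gm.buchiStrategy Q G v :=
  fun _ v _ => Gm.edge_succIn _ v

variable {ρ1 : List V → V → V} {v0 : V} {π : ℕ → V}

theorem mem_gfp_of_buchiStrategy [Finite V] (hρ1 : Gm.Strategy1 ρ1)
    (hπ : Gm.Compliant (fun _ v => Gm.buchiStrategy Q G v) ρ1 v0 π)
    (hv0 : v0 ∈ (Gm.buchiOuter Q G).gfp) (i : ℕ) : π i ∈ (Gm.buchiOuter Q G).gfp := by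
  induction i with
  | zero => exact hπ.1 ▸ hv0
  | succ i ih =>
    rcases Gm.mem_V0_or_mem_V1 (π i) with h0 | h1
    · rw [(hπ.2 i).1 h0]
      exact (Gm.buchiStrategy_mem ih h0).1
    · exact Gm.mem_of_mem_cpre (Gm.mem_cpre_of_mem_buchiStep (Gm.innerStage_subset _)
        (Gm.mem_buchiStep_innerRank ih)) h1 (hπ.edge Gm.strategy0_buchiStrategy hρ1 i)

theorem buchiStrategy_step [Finite V] (hρ1 : Gm.Strategy1 ρ1)
    (hπ : Gm.Compliant (fun _ v => Gm.buchiStrategy Q G v) ρ1 v0 π) {i n : ℕ}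
    (hi : π i ∈ Gm.innerStage Q G (n + 1)) (hG : π i ∉ G)
    (hlive : ∀ w ∈ Gm.innerStage Q G n, ¬Gm.El (π i) w) :
    π (i + 1) ∈ Gm.innerStage Q G n := by
  have hstep : π i ∈ Gm.buchiStep Q G (Gm.buchiOuter Q G).gfp (Gm.innerStage Q G n) := by
    rw [innerStage, Function.iterate_succ_apply'] at hi
    exact hi
  have hc : π i ∈ Gm.cpre (Gm.innerStage Q G n) :=
    (Gm.mem_apre_of_mem_buchiStep hstep hG).resolve_right fun ⟨⟨w, hl, hw⟩, _⟩ => hlive w hw hl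
  rcases Gm.mem_V0_or_mem_V1 (π i) with h0 | h1
  · rw [(hπ.2 i).1 h0]
    exact Gm.innerStage_mono (Nat.lt_succ_iff.1 (entryStage_lt rfl hi))
      ((Gm.buchiStrategy_mem (Gm.innerStage_subset _ hi) h0).2 hG)
  · exact Gm.mem_of_mem_cpre hc h1 (hπ.edge Gm.strategy0_buchiStrategy hρ1 i)

theorem eventually_notMem_innerStage [Finite V] (hρ1 : Gm.Strategy1 ρ1)
    (hπ : Gm.Compliant (fun _ v => Gm.buchiStrategy Q G v) ρ1 v0 π) (hfair : Gm.StronglyFair π)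
    (hG : ∀ᶠ i in atTop, π i ∉ G) (n : ℕ) : ∀ᶠ i in atTop, π i ∉ Gm.innerStage Q G n := by
  induction n with
  | zero => exact Filter.Eventually.of_forall fun _ h => h
  | succ n ih =>
    rw [← Filter.not_frequently]
    intro hfreq
    obtain ⟨u, hu, hfu⟩ := hfreq.exists_frequently_eq
    have huG : u ∉ G := by
      obtain ⟨i, rfl, h⟩ := (hfu.and_eventually hG).exists
      exact h
    have hnext : ∃ᶠ i in atTop, π (i + 1) ∈ Gm.innerStage Q G n := by
      by_cases hlive : ∃ w ∈ Gm.innerStage Q G n, Gm.El u w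
      · obtain ⟨w, hw, hl⟩ := hlive
        exact (Nat.frequently_atTop_iff_infinite.2 (hfair u w hl
          (Nat.frequently_atTop_iff_infinite.1 hfu))).mono fun _ h => h.2 ▸ hw
      · push Not at hlive
        exact hfu.mono fun i hi => Gm.buchiStrategy_step hρ1 hπ (hi ▸ hu) (hi ▸ huG) (hi ▸ hlive)
    exact Filter.not_frequently.2 ih ((tendsto_add_atTop_nat 1).frequently hnext)

theorem frequently_mem_of_buchiStrategy [Finite V] (hρ1 : Gm.Strategy1 ρ1)
    (hπ : Gm.Compliant (fun _ v => Gm.buchiStrategy Q G v) ρ1 v0 π)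
    (hv0 : v0 ∈ (Gm.buchiOuter Q G).gfp) (hfair : Gm.StronglyFair π) :
    ∃ᶠ i in atTop, π i ∈ G := by
  by_contra hG
  rw [Filter.not_frequently] at hG
  obtain ⟨m, hm⟩ := Gm.exists_innerStage_eq (Q := Q) (G := G)
  obtain ⟨i, hi⟩ := (Gm.eventually_notMem_innerStage hρ1 hπ hfair hG m).exists
  exact hi (hm ▸ Gm.mem_gfp_of_buchiStrategy hρ1 hπ hv0 i)

theorem winsFrom_buchiStrategy [Finite V] (hv0 : v0 ∈ (Gm.buchiOuter Q G).gfp) :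
    Gm.WinsFrom (safeBuchi Q G) (fun _ v => Gm.buchiStrategy Q G v) v0 := by
  refine ⟨Gm.strategy0_buchiStrategy, fun ρ1 hρ1 π hπ hfair => ⟨fun i => ?_, ?_⟩⟩
  · exact (Gm.mem_buchiStep_innerRank (Gm.mem_gfp_of_buchiStrategy hρ1 hπ hv0 i)).1
  · exact Filter.frequently_atTop.1 (Gm.frequently_mem_of_buchiStrategy hρ1 hπ hv0 hfair)

end Soundness

section Completeness

variable {V : Type*} (Gm : LiveGameGraph V) (Q G : Set V) {v w : V} {n : ℕ}

def outerStage (n : ℕ) : Set V := (Gm.buchiOuter Q G)^[n] Set.univ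

/-- For `v ∉ Z`, the `k` with `v ∈ outerStage k \ outerStage (k + 1)`. -/
noncomputable def outerLevel (v : V) : ℕ := entryStage (fun n => (Gm.outerStage Q G n)ᶜ) v

variable {Q G}

theorem outerStage_anti : Antitone (Gm.outerStage Q G) :=
  Monotone.antitone_iterate_of_map_le (OrderHom.mono _) (Set.subset_univ _)

theorem outerStage_succ (n : ℕ) :
    Gm.outerStage Q G (n + 1) = Gm.buchiOuter Q G (Gm.outerStage Q G n) :=
  Function.iterate_succ_apply' _ n _

theorem gfp_subset_outerStage (n : ℕ) : (Gm.buchiOuter Q G).gfp ⊆ Gm.outerStage Q G n :=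
  OrderHom.gfp_le_iterate_top _ n

theorem outerLevel_lt (hw : w ∉ Gm.outerStage Q G n) : Gm.outerLevel Q G w < n :=
  entryStage_lt (by simp [outerStage]) hw

theorem mem_outerStage_outerLevel : v ∈ Gm.outerStage Q G (Gm.outerLevel Q G v) :=
  not_not.1 (notMem_entryStage (s := fun n => (Gm.outerStage Q G n)ᶜ) (by simp [outerStage]))

theorem notMem_buchiStep_outerLevel [Finite V] (hv : v ∉ (Gm.buchiOuter Q G).gfp) :
    v ∉ Gm.buchiStep Q G (Gm.outerStage Q G (Gm.outerLevel Q G v))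
      (Gm.outerStage Q G (Gm.outerLevel Q G v + 1)) := by
  obtain ⟨m, hm⟩ := OrderHom.exists_iterate_top_eq_gfp (Gm.buchiOuter Q G)
  have hvm : v ∉ Gm.outerStage Q G m := by rwa [outerStage, ← Set.top_eq_univ, hm]
  have hout : v ∉ Gm.outerStage Q G (Gm.outerLevel Q G v + 1) :=
    mem_entryStage_succ (s := fun n => (Gm.outerStage Q G n)ᶜ) (by simp [outerStage]) hvm
  have hfix : Gm.buchiStep Q G (Gm.outerStage Q G (Gm.outerLevel Q G v))
      (Gm.outerStage Q G (Gm.outerLevel Q G v + 1)) =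
        Gm.outerStage Q G (Gm.outerLevel Q G v + 1) := by
    rw [Gm.outerStage_succ]
    exact (Gm.buchiStep Q G _).map_lfp
  rwa [hfix]

variable (Q G) [Fintype V]

/-- A successor of `v` that does not raise `outerLevel` whenever there is one. -/
noncomputable def spoilerDefault (v : V) : V :=
  Gm.succIn (Gm.outerStage Q G (Gm.outerLevel Q G v + 1))ᶜ v

open Classical in
/-- While the play has stayed in `Q`, Player 1 lowers `outerLevel` whenever it can; otherwise it
plays round robin over the live edges, which makes the play fair once no more descents occur. -/
noncomputable def spoiler (h : List V) (v : V) : V :=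
  if (∀ x ∈ h, x ∈ Q) ∧ ∃ w, Gm.E v w ∧ w ∉ Gm.outerStage Q G (Gm.outerLevel Q G v) then
    Gm.succIn (Gm.outerStage Q G (Gm.outerLevel Q G v))ᶜ v
  else Gm.roundRobin (Gm.spoilerDefault Q G) h v

variable {Q G}

theorem strategy1_spoiler : Gm.Strategy1 (Gm.spoiler Q G) := fun h v _ => by
  unfold spoiler
  split_ifs
  exacts [Gm.edge_succIn _ v, Gm.edge_roundRobin (fun u => Gm.edge_succIn _ u) h v]

theorem spoiler_eq_roundRobin_or (h : List V) (v : V) :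
    Gm.spoiler Q G h v = Gm.roundRobin (Gm.spoilerDefault Q G) h v ∨
      Gm.spoiler Q G h v ∉ Gm.outerStage Q G (Gm.outerLevel Q G v) := by
  unfold spoiler
  split_ifs with hd
  exacts [Or.inr (Gm.succIn_mem hd.2), Or.inl rfl]

theorem spoiler_eq_roundRobin {h : List V} (hh : ∃ x ∈ h, x ∉ Q) (v : V) :
    Gm.spoiler Q G h v = Gm.roundRobin (Gm.spoilerDefault Q G) h v := by
  rw [spoiler, if_neg fun hd => hh.elim fun x ⟨hx, hxQ⟩ => hxQ (hd.1 x hx)]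

theorem spoiler_notMem {h : List V} (hh : ∀ x ∈ h, x ∈ Q) (hQ : v ∈ Q)
    (hv : v ∉ (Gm.buchiOuter Q G).gfp) (h1 : v ∈ Gm.V1) :
    Gm.spoiler Q G h v ∉ Gm.outerStage Q G (Gm.outerLevel Q G v + 1) ∧
      (v ∈ G → Gm.spoiler Q G h v ∉ Gm.outerStage Q G (Gm.outerLevel Q G v)) := by
  set k := Gm.outerLevel Q G v
  have hnot := Gm.notMem_buchiStep_outerLevel hv
  by_cases hd : ∃ w, Gm.E v w ∧ w ∉ Gm.outerStage Q G k
  · have hw : Gm.spoiler Q G h v ∉ Gm.outerStage Q G k := by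
      rw [spoiler, if_pos ⟨hh, hd⟩]
      exact Gm.succIn_mem hd
    exact ⟨fun h' => hw (Gm.outerStage_anti k.le_succ h'), fun _ => hw⟩
  have hG : v ∉ G := fun hG => hd (Gm.exists_edge_notMem_of_notMem_cpre
    (Gm.notMem_cpre_of_notMem_buchiStep_of_mem hQ hG hnot) h1)
  refine ⟨?_, fun hG' => absurd hG' hG⟩
  rw [spoiler, if_neg fun h' => hd h'.2]
  by_cases hl : ∃ w, Gm.El v w
  · obtain ⟨w, hw⟩ := hl
    push Not at hd
    exact fun h' => Gm.notMem_lpre_of_notMem_buchiStep hQ hnot ⟨h1, hd⟩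
      ⟨_, Gm.roundRobin_live _ h hw, h'⟩
  · push Not at hl
    rw [Gm.roundRobin_of_not_live _ h hl]
    exact Gm.succIn_mem (Gm.exists_edge_notMem_of_notMem_cpre
      (Gm.notMem_cpre_of_notMem_buchiStep hQ hnot) h1)

variable {ρ0 : List V → V → V} {v0 : V} {π : ℕ → V}

theorem spoiler_play_step (hρ0 : Gm.Strategy0 ρ0) (hπ : Gm.Compliant ρ0 (Gm.spoiler Q G) v0 π)
    {i : ℕ} (hQ : ∀ j ≤ i, π j ∈ Q) (hv : π i ∉ (Gm.buchiOuter Q G).gfp) :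
    π (i + 1) ∉ Gm.outerStage Q G (Gm.outerLevel Q G (π i) + 1) ∧
      (π i ∈ G → π (i + 1) ∉ Gm.outerStage Q G (Gm.outerLevel Q G (π i))) := by
  have hnot := Gm.notMem_buchiStep_outerLevel hv
  rcases Gm.mem_V0_or_mem_V1 (π i) with h0 | h1
  · have hE := hπ.edge hρ0 Gm.strategy1_spoiler i
    exact ⟨Gm.notMem_of_notMem_cpre (Gm.notMem_cpre_of_notMem_buchiStep (hQ i le_rfl) hnot) h0 hE,
      fun hG => Gm.notMem_of_notMem_cpre
        (Gm.notMem_cpre_of_notMem_buchiStep_of_mem (hQ i le_rfl) hG hnot) h0 hE⟩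
  · rw [(hπ.2 i).2 h1]
    refine Gm.spoiler_notMem (fun x hx => ?_) (hQ i le_rfl) hv h1
    obtain ⟨j, hj, rfl⟩ := mem_history.1 hx
    exact hQ j hj.le

theorem eventually_roundRobin_of_forall_mem (hρ0 : Gm.Strategy0 ρ0)
    (hπ : Gm.Compliant ρ0 (Gm.spoiler Q G) v0 π) (hQ : ∀ i, π i ∈ Q)
    (hv0 : v0 ∉ (Gm.buchiOuter Q G).gfp) :
    ∃ M, ∀ i ≥ M, π i ∉ G ∧
      (π i ∈ Gm.V1 → π (i + 1) = Gm.roundRobin (Gm.spoilerDefault Q G) (history π i) (π i)) := by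
  have hstep := fun i => Gm.spoiler_play_step hρ0 hπ (i := i) fun j _ => hQ j
  have hZ : ∀ i, π i ∉ (Gm.buchiOuter Q G).gfp := by
    intro i
    induction i with
    | zero => exact hπ.1 ▸ hv0
    | succ i ih => exact fun h => (hstep i ih).1 (Gm.gfp_subset_outerStage _ h)
  have hanti : Antitone fun i => Gm.outerLevel Q G (π i) :=
    antitone_nat_of_succ_le fun i => Nat.lt_succ_iff.1 (Gm.outerLevel_lt (hstep i (hZ i)).1)
  obtain ⟨M, hM⟩ := WellFoundedLT.antitone_chain_condition hanti
  refine ⟨M, fun i hi => ?_⟩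
  have hstay : π (i + 1) ∈ Gm.outerStage Q G (Gm.outerLevel Q G (π i)) := by
    rw [← hM i hi, hM (i + 1) (by omega)]
    exact Gm.mem_outerStage_outerLevel
  refine ⟨fun hG => (hstep i (hZ i)).2 hG hstay, fun h1 => ?_⟩
  rw [(hπ.2 i).2 h1] at hstay ⊢
  exact (Gm.spoiler_eq_roundRobin_or _ _).resolve_right (not_not.2 hstay)

theorem winningRegion_subset_gfp :
    Gm.WinningRegion (safeBuchi Q G) ⊆ (Gm.buchiOuter Q G).gfp := by
  rintro v0 ⟨ρ0, hρ0, hwin⟩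
  by_contra hv0
  obtain ⟨π, hπ⟩ := Gm.exists_compliant ρ0 (Gm.spoiler Q G) v0
  have hwin := hwin _ Gm.strategy1_spoiler π hπ
  by_cases hQ : ∀ i, π i ∈ Q
  · obtain ⟨M, hM⟩ := Gm.eventually_roundRobin_of_forall_mem hρ0 hπ hQ hv0
    obtain ⟨i, hi, hG⟩ := (hwin (Gm.stronglyFair_of_roundRobin fun i hi => (hM i hi).2)).2 M
    exact (hM i hi).1 hG
  · push Not at hQ
    obtain ⟨i0, hi0⟩ := hQ
    refine hi0 ((hwin (Gm.stronglyFair_of_roundRobin (d := Gm.spoilerDefault Q G) (M := i0 + 1)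
      fun i hi h1 => ?_)).1 i0)
    rw [(hπ.2 i).2 h1]
    exact Gm.spoiler_eq_roundRobin ⟨π i0, mem_history.2 ⟨i0, by omega, rfl⟩, hi0⟩ _

end Completeness

end LiveGameGraph

/-- the fixpoint νY. μX. (Q ∩ [(G ∩ Cpre(Y)) ∪ Apre(Y,X)]) equals the
winning region of Player 0 in the fair adversarial game for the safe-Büchi
condition □Q ∧ □◇G, and a memoryless winning Player-0 strategy exists on it. -/
theorem fair_adversarial_safe_buchi {V : Type*} [Fintype V]
    (Gm : LiveGameGraph V) (Q G : Set V) (Zstar : Set V)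
    (hZ : Zstar = gfpSet fun Y => lfpSet fun X =>
      Q ∩ ((G ∩ Gm.cpre Y) ∪ Gm.apre Y X)) :
    Zstar = Gm.WinningRegion
        (fun π => (∀ i, π i ∈ Q) ∧ ∀ N, ∃ i ≥ N, π i ∈ G) ∧
    ∃ σ : V → V, (∀ v ∈ Gm.V0, Gm.E v (σ v)) ∧
      ∀ v0 ∈ Zstar,
        Gm.WinsFrom (fun π => (∀ i, π i ∈ Q) ∧ ∀ N, ∃ i ≥ N, π i ∈ G)
          (fun _ v => σ v) v0 := by
  have hZ : Zstar = (Gm.buchiOuter Q G).gfp := hZ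
  subst hZ
  refine ⟨Set.Subset.antisymm (fun v hv => ⟨_, Gm.winsFrom_buchiStrategy hv⟩)
    Gm.winningRegion_subset_gfp, Gm.buchiStrategy Q G, fun v _ => Gm.edge_succIn _ v,
    fun v hv => Gm.winsFrom_buchiStrategy hv⟩
end
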